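/- Let q be a prime power and t ≥ 2 an integer. Then N_t(q) = (φ(t)/t)·(q−1) if rad₄(t) divides q−1, and N_t(q) = 0 otherwise. -/

import Mathlib

/-!
Over a finite field `F` with `q` elements, `X ^ t - a` is irreducible exactly when `a` is not a
`p`-th power for any prime `p ∣ t` and, if `4 ∣ t`, `-1` is a square in `F` (Capelli's criterion;
when `-1` is not a square, every `X ^ 4 - a` splits into two quadratics). If a prime `p ∣ t` does
not divide `q - 1`, then `p`-th powering is bijective on `F`, so no binomial is irreducible; if
`4 ∣ t` and `4 ∤ q - 1`, then `-1` is not a square. Hence irreducible binomials force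
`rad₄ t ∣ q - 1`. Conversely, when `rad₄ t ∣ q - 1`, writing `a = g ^ k` for a generator `g` of
`Fˣ`, the condition says exactly that `k` is coprime to `t`; coprimality to `t` is periodic with
period `rad t ∣ q - 1`, so `(q - 1) φ(t) / t` of the `q - 1` exponents qualify.
-/

open Polynomial Finset

/-- The radical of `n`: the largest squarefree divisor of `n`. -/
def rad (n : ℕ) : ℕ := ∏ p ∈ n.primeFactors, p

/-- `rad₄ t = rad t` if `4 ∤ t` and `2 * rad t` otherwise. -/
def rad4 (n : ℕ) : ℕ := if 4 ∣ n then 2 * rad n else rad n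

/-- `Nt t q` is the number of elements `a` of the finite field of `q` elements
(for `q` a prime power) such that the binomial `X ^ t - a` is irreducible;
it is `0` if `q` is not a prime power. -/
noncomputable def Nt (t q : ℕ) : ℕ :=
  if h : IsPrimePow q then
    haveI : Fact q.minFac.Prime := ⟨Nat.minFac_prime h.ne_one⟩
    Nat.card {a : GaloisField q.minFac (q.factorization q.minFac) //
      Irreducible (X ^ t - C a)}
  else 0

open scoped Nat

open UniqueFactorizationMonoid

theorem Nat.coprime_iff_forall_prime_dvd_not_dvd {m n : ℕ} :
    m.Coprime n ↔ ∀ p, p.Prime → p ∣ m → ¬p ∣ n :=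
  ⟨fun h _ hp hpm hpn ↦ hp.not_dvd_one (h.gcd_eq_one ▸ Nat.dvd_gcd hpm hpn), Nat.coprime_of_dvd⟩

theorem rad_eq_radical (n : ℕ) : rad n = radical n :=
  Nat.radical_eq_prod_primeFactors.symm

theorem rad_ne_zero (n : ℕ) : rad n ≠ 0 :=
  rad_eq_radical n ▸ radical_ne_zero

theorem primeFactors_rad (n : ℕ) : (rad n).primeFactors = n.primeFactors :=
  Nat.primeFactors_prod_primeFactors n

theorem Nat.Prime.dvd_rad_iff {p n : ℕ} (hp : p.Prime) (hn : n ≠ 0) : p ∣ rad n ↔ p ∣ n := by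
  simpa [hp, hn, rad_ne_zero] using congrArg (p ∈ ·) (primeFactors_rad n)

theorem coprime_rad_iff {n k : ℕ} (hn : n ≠ 0) : (rad n).Coprime k ↔ n.Coprime k := by
  simp only [Nat.coprime_iff_forall_prime_dvd_not_dvd]
  exact forall_congr' fun p ↦ imp_congr_right fun hp ↦ by rw [hp.dvd_rad_iff hn]

theorem rad_dvd_iff {n k : ℕ} (hn : n ≠ 0) : rad n ∣ k ↔ ∀ p, p.Prime → p ∣ n → p ∣ k :=
  ⟨fun h _ hp hpn ↦ ((hp.dvd_rad_iff hn).2 hpn).trans h, fun h ↦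
    Finset.prod_primes_dvd k (fun _ hp ↦ (Nat.prime_of_mem_primeFactors hp).prime)
      fun p hp ↦ h p (Nat.prime_of_mem_primeFactors hp) (Nat.dvd_of_mem_primeFactors hp)⟩

theorem totient_rad_mul (n : ℕ) : φ (rad n) * n = φ n * rad n := by
  have hr : φ (rad n) * rad n = rad n * ∏ p ∈ n.primeFactors, (p - 1) := by
    have h := Nat.totient_mul_prod_primeFactors (rad n)
    rwa [primeFactors_rad] at h
  have hn : φ n * rad n = n * ∏ p ∈ n.primeFactors, (p - 1) := Nat.totient_mul_prod_primeFactors n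
  rw [mul_comm (rad n)] at hr
  rw [Nat.eq_of_mul_eq_mul_right (Nat.pos_of_ne_zero (rad_ne_zero n)) hr,
    hn, mul_comm]

theorem rad4_dvd_iff {n k : ℕ} (hn : n ≠ 0) : rad4 n ∣ k ↔ rad n ∣ k ∧ (4 ∣ n → 4 ∣ k) := by
  unfold rad4
  split_ifs with h4
  · obtain ⟨s, hs⟩ : 2 ∣ rad n :=
      (Nat.prime_two.dvd_rad_iff hn).2 ((by norm_num : 2 ∣ 4).trans h4)
    have hs2 : ¬2 ∣ s := by
      rintro ⟨u, rfl⟩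
      have := (rad_eq_radical n ▸ squarefree_radical (a := n)) 2 ⟨u, by rw [hs]; ring⟩
      norm_num at this
    have hcop : Nat.Coprime 4 s := (Nat.prime_two.coprime_iff_not_dvd.2 hs2).pow_left 2
    rw [hs, show 2 * (2 * s) = 4 * s by ring]
    exact ⟨fun h ↦ ⟨(Dvd.intro_left 2 (by ring)).trans h, fun _ ↦ (dvd_mul_right 4 s).trans h⟩,
      fun ⟨h, h4k⟩ ↦ hcop.mul_dvd_of_dvd_of_dvd (h4k h4) ((dvd_mul_left s 2).trans h)⟩
  · simp [h4]

theorem count_coprime_mul (r c : ℕ) : Nat.count r.Coprime (c * r) = c * φ r := by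
  induction c with
  | zero => simp
  | succ c ih =>
    rw [add_mul, one_mul, Nat.count_add, ih, add_mul, one_mul]
    simp only [Nat.coprime_mul_right_add_right]
    rw [Nat.count_eq_card_filter_range, Nat.totient]

theorem count_coprime_mul_eq_mul_totient {t n : ℕ} (ht : t ≠ 0) (h : rad t ∣ n) :
    Nat.count t.Coprime n * t = n * φ t := by
  obtain ⟨c, rfl⟩ := h
  have hcount : Nat.count t.Coprime (rad t * c) = c * φ (rad t) := by
    rw [mul_comm, ← count_coprime_mul]
    simp only [Nat.count_eq_card_filter_range, coprime_rad_iff ht]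
  rw [hcount, mul_assoc, totient_rad_mul]
  ring

section CyclicGroup

variable {G : Type*} [Group G]

theorem exists_pow_eq_pow_iff_dvd {g : G} (hg : ∀ x, x ∈ Subgroup.zpowers g) {p : ℕ}
    (hp : p ∣ Nat.card G) (k : ℕ) : (∃ y : G, y ^ p = g ^ k) ↔ p ∣ k := by
  refine ⟨?_, fun ⟨m, hm⟩ ↦ ⟨g ^ m, by rw [← pow_mul, mul_comm, hm]⟩⟩
  rintro ⟨y, hy⟩
  obtain ⟨j, rfl⟩ := hg y
  have hmod : j * p ≡ k [ZMOD Nat.card G] := by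
    rw [← orderOf_eq_card_of_forall_mem_zpowers hg, ← zpow_eq_zpow_iff_modEq, zpow_mul,
      zpow_natCast, hy, zpow_natCast]
  have hdvd : (p : ℤ) ∣ k - j * p := (Int.natCast_dvd_natCast.2 hp).trans hmod.dvd
  exact Int.natCast_dvd_natCast.1 (by simpa using hdvd.add (dvd_mul_left (p : ℤ) j))

theorem IsCyclic.card_forall_pow_ne_eq_count_coprime [Fintype G] [IsCyclic G] {t : ℕ}
    (ht : ∀ p, p.Prime → p ∣ t → p ∣ Nat.card G) :
    Nat.card {x : G // ∀ p, p.Prime → p ∣ t → ∀ y : G, y ^ p ≠ x} =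
      Nat.count t.Coprime (Nat.card G) := by
  classical
  obtain ⟨g, hg⟩ := IsCyclic.exists_generator (α := G)
  have hcop (k : ℕ) : (∀ p, p.Prime → p ∣ t → ∀ y : G, y ^ p ≠ g ^ k) ↔ t.Coprime k := by
    rw [Nat.coprime_iff_forall_prime_dvd_not_dvd]
    refine forall₃_congr fun p hp hpt ↦ ?_
    rw [← exists_pow_eq_pow_iff_dvd hg (ht p hp hpt), not_exists]
  have hinj : Set.InjOn (g ^ ·) ↑(range (Nat.card G)) := by
    rw [← orderOf_eq_card_of_forall_mem_zpowers hg, coe_range]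
    exact pow_injOn_Iio_orderOf
  rw [Nat.card_eq_fintype_card, Fintype.card_subtype, ← IsCyclic.image_range_card hg,
    filter_image, Finset.card_image_of_injOn (hinj.mono (filter_subset _ _)),
    Nat.count_eq_card_filter_range]
  simp only [hcop]

end CyclicGroup

theorem exists_pow_eq_of_coprime_card_sub_one {M : Type*} [GroupWithZero M] {p : ℕ}
    (hp : p ≠ 0) (h : (Nat.card M - 1).Coprime p) (a : M) : ∃ b : M, b ^ p = a := by
  rcases eq_or_ne a 0 with rfl | ha
  · exact ⟨0, zero_pow hp⟩
  · obtain ⟨y, hy⟩ := (Nat.Coprime.pow_left_bijective (Nat.card_units M ▸ h)).2 (Units.mk0 a ha)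
    exact ⟨y, by simpa using congrArg Units.val hy⟩

theorem card_forall_pow_ne_eq_card_units {M : Type*} [GroupWithZero M] {t : ℕ} (ht : t ≠ 1) :
    Nat.card {a : M // ∀ p, p.Prime → p ∣ t → ∀ b : M, b ^ p ≠ a} =
      Nat.card {x : Mˣ // ∀ p, p.Prime → p ∣ t → ∀ y : Mˣ, y ^ p ≠ x} := by
  have hne {a : M} (ha : ∀ p, p.Prime → p ∣ t → ∀ b : M, b ^ p ≠ a) : a ≠ 0 := by
    rintro rfl
    exact ha _ (Nat.minFac_prime ht) t.minFac_dvd 0 (zero_pow (Nat.minFac_prime ht).ne_zero)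
  refine Nat.card_congr
    { toFun a := ⟨Units.mk0 a.1 (hne a.2), fun p hp hpt y hy ↦ a.2 p hp hpt y ?_⟩
      invFun x := ⟨x.1, fun p hp hpt b hb ↦ ?_⟩
      left_inv _ := rfl
      right_inv _ := Subtype.ext (Units.ext rfl) }
  · simpa using congrArg Units.val hy
  · have hb0 : b ≠ 0 := by
      rintro rfl
      exact x.1.ne_zero (by rw [← hb, zero_pow hp.ne_zero])
    exact x.2 p hp hpt (Units.mk0 b hb0) (Units.ext (by simpa using hb))

section Binomial

open IntermediateField

theorem norm_adjoinSimple_gen_of_minpoly_eq_X_pow_sub_C {K E : Type*} [Field K] [Field E]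
    [Algebra K E] {x : E} {m : ℕ} (hm : m ≠ 0) {a : K} (hx : minpoly K x = X ^ m - C a) :
    Algebra.norm K (AdjoinSimple.gen K x) = (-1) ^ m * -a := by
  have hxi : IsIntegral K x :=
    minpoly.ne_zero_iff.1 (hx ▸ X_pow_sub_C_ne_zero (Nat.pos_of_ne_zero hm) a)
  rw [← adjoin.powerBasis_gen hxi, Algebra.PowerBasis.norm_gen_eq_coeff_zero_minpoly]
  simp [minpoly_gen, hx, Ne.symm hm, coeff_X_pow]

theorem exists_pow_eq_of_pow_eq_neg_one_pow_mul_neg {K : Type*} [Field K] {p r : ℕ}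
    (hp : p.Prime) (hr : r.Prime) {a c : K} (hc : c ^ r = (-1) ^ p * -a)
    (h : p = 2 → r = 2 → IsSquare (-1 : K)) : ∃ b : K, b ^ r = a := by
  rcases hp.eq_two_or_odd' with rfl | hpo
  · rw [show (-1 : K) ^ 2 * -a = -a by ring] at hc
    rcases hr.eq_two_or_odd' with rfl | hro
    · obtain ⟨i, hi⟩ := h rfl rfl
      exact ⟨i * c, by rw [mul_pow, hc, sq, ← hi]; ring⟩
    · exact ⟨-c, by rw [hro.neg_pow, hc, neg_neg]⟩
  · exact ⟨c, by rw [hc, hpo.neg_one_pow]; ring⟩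

-- Capelli's criterion, in the case where its extra condition `a ∉ -4 K⁴` for `4 ∣ n` is implied by
-- `a` not being a square, as `-4 b⁴` is a square once `-1` is.
theorem X_pow_sub_C_irreducible_of_forall_prime {K : Type*} [Field K] {n : ℕ} (hn : n ≠ 0)
    {a : K} (ha : ∀ p : ℕ, p.Prime → p ∣ n → ∀ b : K, b ^ p ≠ a)
    (h4 : 4 ∣ n → IsSquare (-1 : K)) : Irreducible (X ^ n - C a) := by
  induction n using induction_on_primes generalizing K a with
  | zero => exact absurd rfl hn
  | one => simpa using irreducible_X_sub_C a
  | prime_mul p n hp IH =>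
    rw [mul_comm]
    refine X_pow_mul_sub_C_irreducible
      (X_pow_sub_C_irreducible_of_prime hp (ha p hp (dvd_mul_right _ _)))
      fun E _ _ x hx ↦ IH (right_ne_zero_of_mul hn) ?_ ?_
    · intro r hr hrn b hb
      have hnorm : Algebra.norm K b ^ r = (-1) ^ p * -a := by
        rw [← map_pow, hb, norm_adjoinSimple_gen_of_minpoly_eq_X_pow_sub_C hp.ne_zero hx]
      obtain ⟨c, hc⟩ := exists_pow_eq_of_pow_eq_neg_one_pow_mul_neg hp hr hnorm
        fun hp2 hr2 ↦ h4 (by subst hp2 hr2; exact mul_dvd_mul_left 2 hrn)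
      exact ha r hr (dvd_mul_of_dvd_right hrn p) c hc
    · exact fun h4n ↦ by simpa using (h4 (h4n.mul_left p)).map (algebraMap K K⟮x⟯)

theorem not_irreducible_X_pow_four_add_C_sq {K : Type*} [Field K] {e s : K}
    (h : 2 * e = s ^ 2) : ¬Irreducible (X ^ 4 + C (e ^ 2)) := by
  have hC : 2 * C e = C s ^ 2 := by rw [← map_ofNat C 2, ← map_mul, h, map_pow]
  have hfac : (X ^ 4 + C (e ^ 2) : K[X]) =
      (X ^ 2 + C s * X + C e) * (X ^ 2 + C (-s) * X + C e) := by
    rw [map_neg, map_pow]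
    linear_combination (-X ^ 2 : K[X]) * hC
  have hunit (b : K) : ¬IsUnit (X ^ 2 + C b * X + C e) := by
    have hdeg : (X ^ 2 + C b * X + C e : K[X]).degree = 2 := by compute_degree!
    exact not_isUnit_of_degree_pos _ (by rw [hdeg]; decide)
  exact fun H ↦ (H.isUnit_or_isUnit hfac).elim (hunit s) (hunit (-s))

end Binomial

namespace FiniteField

variable {F : Type*} [Field F] [Fintype F]

theorem isSquare_mul_of_not_isSquare {a b : F} (ha : ¬IsSquare a) (hb : ¬IsSquare b) :
    IsSquare (a * b) := by
  classical
  have hne {c : F} (hc : ¬IsSquare c) : c ≠ 0 := by rintro rfl; exact hc ⟨0, (mul_zero 0).symm⟩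
  rw [← quadraticChar_one_iff_isSquare (mul_ne_zero (hne ha) (hne hb)), map_mul,
    quadraticChar_neg_one_iff_not_isSquare.2 ha, quadraticChar_neg_one_iff_not_isSquare.2 hb]
  norm_num

theorem isSquare_neg_one_of_irreducible_X_pow_four_sub_C {a : F}
    (H : Irreducible (X ^ 4 - C a)) : IsSquare (-1 : F) := by
  by_contra h1
  have hsq (x : F) : IsSquare x ∨ IsSquare (-x) :=
    or_iff_not_imp_left.2 fun hx ↦ by simpa using isSquare_mul_of_not_isSquare h1 hx
  have ha : ¬IsSquare a := fun ⟨b, hb⟩ ↦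
    pow_ne_of_irreducible_X_pow_sub_C H (by norm_num : 2 ∣ 4) (by norm_num) b (by rw [hb, sq])
  -- As `-1` is not a square, `-a` is a fourth power and one of `2`, `-2` is a square.
  obtain ⟨x, hx⟩ := (hsq a).resolve_left ha
  obtain ⟨c, hc⟩ : ∃ c : F, x * x = (c ^ 2) ^ 2 := by
    rcases hsq x with ⟨c, hc⟩ | ⟨c, hc⟩
    · exact ⟨c, by rw [hc]; ring⟩
    · exact ⟨c, by rw [← neg_mul_neg, hc]; ring⟩
  obtain ⟨e, s, hes, he⟩ : ∃ e s : F, 2 * e = s ^ 2 ∧ e ^ 2 = -a := by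
    rcases hsq 2 with ⟨w, hw⟩ | ⟨w, hw⟩
    · exact ⟨c ^ 2, w * c, by rw [hw]; ring, by rw [hx, hc]⟩
    · exact ⟨-c ^ 2, w * c, by linear_combination c ^ 2 * hw, by rw [hx, hc]; ring⟩
  exact not_irreducible_X_pow_four_add_C_sq hes (by rwa [he, map_neg, ← sub_eq_add_neg])

theorem isSquare_neg_one_of_irreducible_X_pow_sub_C {t : ℕ} (h4 : 4 ∣ t) {a : F}
    (H : Irreducible (X ^ t - C a)) : IsSquare (-1 : F) := by
  obtain ⟨u, rfl⟩ := h4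
  have hu : u ≠ 0 := by
    rintro rfl
    exact not_irreducible_C (1 - a) (by simpa using H)
  refine isSquare_neg_one_of_irreducible_X_pow_four_sub_C
    (of_irreducible_expand (f := X ^ 4 - C a) hu ?_)
  simpa [← pow_mul, mul_comm] using H

theorem rad4_dvd_card_sub_one_of_irreducible {t : ℕ} (ht : t ≠ 0) {a : F}
    (H : Irreducible (X ^ t - C a)) : rad4 t ∣ Fintype.card F - 1 := by
  have hprime (p : ℕ) (hp : p.Prime) (hpt : p ∣ t) : p ∣ Fintype.card F - 1 := by
    by_contra hpq
    obtain ⟨b, hb⟩ := exists_pow_eq_of_coprime_card_sub_one hp.ne_zero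
      (Nat.card_eq_fintype_card (α := F) ▸ (hp.coprime_iff_not_dvd.2 hpq).symm) a
    exact pow_ne_of_irreducible_X_pow_sub_C H hpt hp.ne_one b hb
  refine (rad4_dvd_iff ht).2 ⟨(rad_dvd_iff ht).2 hprime, fun h4 ↦ ?_⟩
  have h1 := isSquare_neg_one_iff.1 (isSquare_neg_one_of_irreducible_X_pow_sub_C h4 H)
  have h2 := hprime 2 Nat.prime_two ((by norm_num : 2 ∣ 4).trans h4)
  omega

theorem irreducible_X_pow_sub_C_iff_of_rad4_dvd {t : ℕ} (ht : t ≠ 0)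
    (h : rad4 t ∣ Fintype.card F - 1) {a : F} :
    Irreducible (X ^ t - C a) ↔ ∀ p, p.Prime → p ∣ t → ∀ b : F, b ^ p ≠ a := by
  refine ⟨fun H _ hp hpt ↦ pow_ne_of_irreducible_X_pow_sub_C H hpt hp.ne_one,
    fun ha ↦ X_pow_sub_C_irreducible_of_forall_prime ht ha fun h4 ↦ ?_⟩
  have h4q := ((rad4_dvd_iff ht).1 h).2 h4
  have hq := Fintype.card_pos (α := F)
  exact isSquare_neg_one_iff.2 (by omega)

theorem card_irreducible_X_pow_sub_C_mul {t : ℕ} (ht : 2 ≤ t)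
    (h : rad4 t ∣ Fintype.card F - 1) :
    Nat.card {a : F // Irreducible (X ^ t - C a)} * t = (Fintype.card F - 1) * φ t := by
  classical
  have ht0 : t ≠ 0 := by omega
  have hunits : Nat.card Fˣ = Fintype.card F - 1 := by
    rw [Nat.card_units, Nat.card_eq_fintype_card]
  have hrad : rad t ∣ Nat.card Fˣ := hunits ▸ ((rad4_dvd_iff ht0).1 h).1
  rw [Nat.card_congr
      (Equiv.subtypeEquivRight fun _ ↦ irreducible_X_pow_sub_C_iff_of_rad4_dvd ht0 h),
    card_forall_pow_ne_eq_card_units (by omega),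
    IsCyclic.card_forall_pow_ne_eq_count_coprime ((rad_dvd_iff ht0).1 hrad),
    count_coprime_mul_eq_mul_totient ht0 hrad, hunits]

theorem card_irreducible_X_pow_sub_C_eq_zero {t : ℕ} (ht : t ≠ 0)
    (h : ¬rad4 t ∣ Fintype.card F - 1) : Nat.card {a : F // Irreducible (X ^ t - C a)} = 0 :=
  Nat.card_eq_zero.2 (.inl ⟨fun ⟨_, ha⟩ ↦ h (rad4_dvd_card_sub_one_of_irreducible ht ha)⟩)

end FiniteField

theorem exists_Nt_eq_card (t : ℕ) {q : ℕ} (hq : IsPrimePow q) :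
    ∃ (F : Type) (_ : Field F) (_ : Fintype F), Fintype.card F = q ∧
      Nt t q = Nat.card {a : F // Irreducible (X ^ t - C a)} := by
  have : Fact q.minFac.Prime := ⟨Nat.minFac_prime hq.ne_one⟩
  have hk : q.factorization q.minFac ≠ 0 := fun h0 ↦
    hq.ne_one (by rw [← hq.minFac_pow_factorization_eq, h0, pow_zero])
  let _ : Fintype (GaloisField q.minFac (q.factorization q.minFac)) := Fintype.ofFinite _
  refine ⟨GaloisField q.minFac (q.factorization q.minFac), inferInstance, inferInstance, ?_,
    by rw [Nt, dif_pos hq]⟩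
  rw [← Nat.card_eq_fintype_card, GaloisField.card _ _ hk, hq.minFac_pow_factorization_eq]

theorem Nt_eq (q t : ℕ) (hq : IsPrimePow q) (ht : 2 ≤ t) :
    (Nt t q : ℚ) =
      if rad4 t ∣ q - 1 then (Nat.totient t : ℚ) / t * ((q : ℚ) - 1) else 0 := by
  obtain ⟨F, _, _, rfl, hNt⟩ := exists_Nt_eq_card t hq
  rw [hNt]
  split_ifs with h
  · have hQ : (Nat.card {a : F // Irreducible (X ^ t - C a)} * t : ℚ) =
        (Fintype.card F - 1 : ℕ) * φ t := by
      exact_mod_cast FiniteField.card_irreducible_X_pow_sub_C_mul ht h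
    rw [Nat.cast_sub Fintype.card_pos, Nat.cast_one] at hQ
    have ht0 : (t : ℚ) ≠ 0 := by positivity
    field_simp
    linear_combination hQ
  · rw [FiniteField.card_irreducible_X_pow_sub_C_eq_zero (by omega) h, Nat.cast_zero]
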